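/- With respect to the distribution μ^{(θ)} one has ∑_{z∈ℤ} μ^{(θ)}(z)·r(z) = e^{θ} and ∑_{z∈ℤ} μ^{(θ)}(z)·r(−z) = e^{−θ} (both families being summable); consequently ∑_{z∈ℤ} μ^{(θ)}(z)·(r(z)+r(−z)) = 2·cosh(θ). -/

import Mathlib

open Real

/-- The generalized factorial `r(z)! := ∏_{y=1}^{|z|} r(y)`. -/
noncomputable def rfact (r : ℤ → ℝ) (z : ℤ) : ℝ :=
  ∏ y ∈ Finset.range z.natAbs, r (y + 1)

/-- The partition function `Z(θ) := ∑_{z ∈ ℤ} e^{θ z} / r(z)!`. -/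
noncomputable def Zfun (r : ℤ → ℝ) (θ : ℝ) : ℝ :=
  ∑' z : ℤ, Real.exp (θ * z) / rfact r z

/-- The single-site probability mass function `μ^{(θ)}(z) := e^{θ z} / (Z(θ) r(z)!)`. -/
noncomputable def mu (r : ℤ → ℝ) (θ : ℝ) (z : ℤ) : ℝ :=
  Real.exp (θ * z) / (Zfun r θ * rfact r z)

/-! The relation `r(z) r(1 - z) = 1` makes `r(z)!` satisfy `r(z - 1)! r(z) = r(z)!` on all of `ℤ`,
not only for `z ≥ 1`. Hence `μ(z) r(z) = e^θ μ(z - 1)` and `μ(z) r(-z) = e^{-θ} μ(z + 1)`, and the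
two expectations are `e^{±θ}` times the total mass of a shifted copy of `μ`, which is `1`. -/

lemma HasSum.comp_int_add {M : Type*} [AddCommMonoid M] [TopologicalSpace M] {f : ℤ → M} {a : M}
    (hf : HasSum f a) (k : ℤ) : HasSum (fun z => f (z + k)) a :=
  (Equiv.addRight k).hasSum_iff.mpr hf

section Rates

variable {r : ℤ → ℝ}

lemma rfact_pos (hpos : ∀ z, 0 < r z) (z : ℤ) : 0 < rfact r z :=
  Finset.prod_pos fun _ _ => hpos _

lemma rfact_sub_one_mul (hrel : ∀ z, r z * r (-z + 1) = 1) (z : ℤ) :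
    rfact r (z - 1) * r z = rfact r z := by
  rcases le_or_gt 1 z with hz | hz
  · have hn : z.natAbs = (z - 1).natAbs + 1 := by omega
    have hc : ((z - 1).natAbs : ℤ) + 1 = z := by omega
    rw [rfact, rfact, hn, Finset.prod_range_succ, hc]
  · have hn : (z - 1).natAbs = z.natAbs + 1 := by omega
    have hc : (z.natAbs : ℤ) + 1 = -z + 1 := by omega
    rw [rfact, hn, Finset.prod_range_succ, hc, ← rfact, mul_assoc, mul_comm (r _), hrel, mul_one]

lemma mu_mul_rate (hrel : ∀ z, r z * r (-z + 1) = 1) (θ : ℝ) (z : ℤ) :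
    mu r θ z * r z = exp θ * mu r θ (z - 1) := by
  have hr : r z ≠ 0 := left_ne_zero_of_mul_eq_one (hrel z)
  have hexp : exp (θ * z) = exp θ * exp (θ * ((z - 1 : ℤ) : ℝ)) := by
    rw [← exp_add]; push_cast; ring_nf
  rw [mu, mu, ← rfact_sub_one_mul hrel z, hexp]
  field_simp

lemma mu_mul_rate_neg (hrel : ∀ z, r z * r (-z + 1) = 1) (θ : ℝ) (z : ℤ) :
    mu r θ z * r (-z) = exp (-θ) * mu r θ (z + 1) := by
  have hinv : r (-z) * r (z + 1) = 1 := by simpa using hrel (-z)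
  have hshift := mu_mul_rate hrel θ (z + 1)
  rw [add_sub_cancel_right] at hshift
  calc mu r θ z * r (-z)
      = exp (-θ) * (exp θ * mu r θ z) * r (-z) := by rw [← mul_assoc, ← exp_add, neg_add_cancel,
          exp_zero, one_mul]
    _ = exp (-θ) * mu r θ (z + 1) * (r (-z) * r (z + 1)) := by rw [← hshift]; ring
    _ = exp (-θ) * mu r θ (z + 1) := by rw [hinv, mul_one]

lemma hasSum_mu (hpos : ∀ z, 0 < r z) {θ : ℝ}
    (hZ : Summable fun z : ℤ => Real.exp (θ * z) / rfact r z) : HasSum (mu r θ) 1 := by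
  have hZpos : 0 < Zfun r θ :=
    hZ.tsum_pos (fun z => div_nonneg (exp_pos _).le (rfact_pos hpos z).le) 0
      (by simp [rfact])
  have hmu : mu r θ = fun z : ℤ => exp (θ * z) / rfact r z / Zfun r θ := by
    ext z; rw [mu, div_div, mul_comm (rfact r z)]
  rw [hmu, ← div_self hZpos.ne']
  exact hZ.hasSum.div_const _

lemma hasSum_mu_mul_rate (hpos : ∀ z, 0 < r z) (hrel : ∀ z, r z * r (-z + 1) = 1) {θ : ℝ}
    (hZ : Summable fun z : ℤ => Real.exp (θ * z) / rfact r z) :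
    HasSum (fun z => mu r θ z * r z) (exp θ) := by
  simpa only [mu_mul_rate hrel, sub_eq_add_neg, mul_one] using
    ((hasSum_mu hpos hZ).comp_int_add (-1)).mul_left (exp θ)

lemma hasSum_mu_mul_rate_neg (hpos : ∀ z, 0 < r z) (hrel : ∀ z, r z * r (-z + 1) = 1) {θ : ℝ}
    (hZ : Summable fun z : ℤ => Real.exp (θ * z) / rfact r z) :
    HasSum (fun z => mu r θ z * r (-z)) (exp (-θ)) := by
  simpa only [mu_mul_rate_neg hrel, mul_one] using
    ((hasSum_mu hpos hZ).comp_int_add 1).mul_left (exp (-θ))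

end Rates

theorem expectation_of_rates (r : ℤ → ℝ) (hpos : ∀ z : ℤ, 0 < r z)
    (hrel : ∀ z : ℤ, r z * r (-z + 1) = 1) (θ : ℝ)
    (hZ : Summable (fun z : ℤ => Real.exp (θ * z) / rfact r z)) :
    Summable (fun z : ℤ => mu r θ z * r z) ∧
    (∑' z : ℤ, mu r θ z * r z) = Real.exp θ ∧
    Summable (fun z : ℤ => mu r θ z * r (-z)) ∧
    (∑' z : ℤ, mu r θ z * r (-z)) = Real.exp (-θ) ∧
    (∑' z : ℤ, mu r θ z * (r z + r (-z))) = 2 * Real.cosh θ := by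
  have hplus := hasSum_mu_mul_rate hpos hrel hZ
  have hminus := hasSum_mu_mul_rate_neg hpos hrel hZ
  have hboth : HasSum (fun z => mu r θ z * (r z + r (-z))) (exp θ + exp (-θ)) := by
    simpa only [mul_add] using hplus.add hminus
  refine ⟨hplus.summable, hplus.tsum_eq, hminus.summable, hminus.tsum_eq, ?_⟩
  rw [hboth.tsum_eq, cosh_eq]
  ring
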